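/- (Variational lemma) Let σ be a distribution on size-K multisets over a finite type X, with K ≥ 1. Then among all distributions ω on X, the KL divergence D_KL(σ, Multinomial[K](ω)) is minimized at ω = flrn≫σ, the distribution x ↦ (1/K)·Σ_φ σ(φ)·φ(x). -/

import Mathlib

open Finset

noncomputable def validity {X : Type*} [Fintype X] (ω p : X → ℝ) : ℝ := ∑ x, ω x * p x
noncomputable def updateD {X : Type*} [Fintype X] (ω p : X → ℝ) : X → ℝ :=
  fun x => ω x * p x / validity ω p
noncomputable def push {X Y : Type*} [Fintype X] (c : X → Y → ℝ) (ω : X → ℝ) : Y → ℝ :=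
  fun y => ∑ x, ω x * c x y
noncomputable def pull {X Y : Type*} [Fintype Y] (c : X → Y → ℝ) (q : Y → ℝ) : X → ℝ :=
  fun x => ∑ y, c x y * q y
noncomputable def dagger {X Y : Type*} [Fintype X] (c : X → Y → ℝ) (ω : X → ℝ) : Y → X → ℝ :=
  fun y x => ω x * c x y / push c ω y

def IsDist {X : Type*} [Fintype X] (ω : X → ℝ) : Prop :=
  (∀ x, 0 ≤ ω x) ∧ ∑ x, ω x = 1
def IsChannel {X Y : Type*} [Fintype Y] (c : X → Y → ℝ) : Prop :=
  ∀ x, IsDist (c x)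
def IsPred {X : Type*} (p : X → ℝ) : Prop := ∀ x, 0 ≤ p x ∧ p x ≤ 1

noncomputable def coefm {X : Type*} [Fintype X] [DecidableEq X] (K : ℕ) (φ : Sym X K) : ℝ :=
  (K.factorial : ℝ) / ∏ x, (((φ : Multiset X).count x).factorial : ℝ)
noncomputable def multinom {X : Type*} [Fintype X] [DecidableEq X] (K : ℕ) (ω : X → ℝ)
    (φ : Sym X K) : ℝ :=
  coefm K φ * ∏ x, ω x ^ ((φ : Multiset X).count x)
noncomputable def flrn {X : Type*} [DecidableEq X] (K : ℕ) (φ : Sym X K) : X → ℝ :=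
  fun x => ((φ : Multiset X).count x : ℝ) / K
def acc {X : Type*} {K : ℕ} (v : Fin K → X) : Sym X K :=
  ⟨Multiset.map v Finset.univ.val, by simp⟩
noncomputable def arr {X : Type*} [Fintype X] [DecidableEq X] {K : ℕ} (φ : Sym X K) :
    (Fin K → X) → ℝ :=
  fun v => if acc v = φ then 1 / coefm K φ else 0
noncomputable def Mchan {X Y : Type*} [Fintype X] [DecidableEq X] [Fintype Y] [DecidableEq Y]
    {K : ℕ} (c : X → Y → ℝ) : Sym X K → Sym Y K → ℝ :=
  fun φ ψ => ∑ v : Fin K → X, arr φ v *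
    ∑ w : Fin K → Y, (∏ i, c (v i) (w i)) * (if acc w = ψ then 1 else 0)
open Classical in
noncomputable def klE {Z : Type*} [Fintype Z] (ω ρ : Z → ℝ) : EReal :=
  if ∀ z, ω z ≠ 0 → ρ z ≠ 0 then ((∑ z, ω z * Real.log (ω z / ρ z) : ℝ) : EReal) else ⊤

/-!
Taking logarithms of the multinomial probabilities, the cross entropy
`∑ φ, σ φ * log (Multinomial[K](ω) φ)` equals a term independent of `ω` plus
`K * ∑ x, ρ x * log (ω x)` with `ρ = flrn ≫ σ`. Minimising the divergence in `ω` thus means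
maximising `∑ x, ρ x * log (ω x)`, and Gibbs' inequality (`log t ≤ t - 1`) says this happens at
`ω = ρ`. The support of `ρ` covers every `x` occurring in some `φ` with `σ φ ≠ 0`, so the
divergence at `ρ` is finite, and whenever the divergence at `ω` is finite, `ω` is nonzero on
the support of `ρ`, as Gibbs' inequality requires.
-/

section Entropy

variable {ι : Type*} [Fintype ι]

theorem mul_log_sub_mul_log_le {a b : ℝ} (ha : 0 ≤ a) (hb : 0 ≤ b) (hab : a ≠ 0 → b ≠ 0) :
    a * Real.log b - a * Real.log a ≤ b - a := by
  rcases ha.eq_or_lt with rfl | ha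
  · simpa using hb
  have hb' : 0 < b := hb.lt_of_ne' (hab ha.ne')
  have hlog := Real.log_le_sub_one_of_pos (div_pos hb' ha)
  rw [Real.log_div hb'.ne' ha.ne'] at hlog
  calc a * Real.log b - a * Real.log a = a * (Real.log b - Real.log a) := by ring
    _ ≤ a * (b / a - 1) := mul_le_mul_of_nonneg_left hlog ha.le
    _ = b - a := by field_simp

theorem sum_mul_log_le_sum_mul_log {ρ ω : ι → ℝ} (hρ : ∀ i, 0 ≤ ρ i) (hω : ∀ i, 0 ≤ ω i)
    (hsum : ∑ i, ω i ≤ ∑ i, ρ i) (hsupp : ∀ i, ρ i ≠ 0 → ω i ≠ 0) :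
    ∑ i, ρ i * Real.log (ω i) ≤ ∑ i, ρ i * Real.log (ρ i) := by
  have h := sum_le_sum fun i (_ : i ∈ univ) => mul_log_sub_mul_log_le (hρ i) (hω i) (hsupp i)
  rw [sum_sub_distrib, sum_sub_distrib] at h
  linarith

theorem klE_eq_sub {σ τ : ι → ℝ} (h : ∀ i, σ i ≠ 0 → τ i ≠ 0) :
    klE σ τ = ((∑ i, σ i * Real.log (σ i) - ∑ i, σ i * Real.log (τ i) : ℝ) : EReal) := by
  rw [klE, if_pos h, ← sum_sub_distrib]
  refine congrArg _ (sum_congr rfl fun i _ => ?_)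
  rcases eq_or_ne (σ i) 0 with h0 | h0
  · simp [h0]
  · rw [Real.log_div h0 (h i h0)]
    ring

end Entropy

section Channel

variable {X Y : Type*} [Fintype X] {c : X → Y → ℝ} {ω : X → ℝ}

theorem IsDist.push [Fintype Y] (hω : IsDist ω) (hc : IsChannel c) : IsDist (push c ω) := by
  refine ⟨fun y => sum_nonneg fun x _ => mul_nonneg (hω.1 x) ((hc x).1 y), ?_⟩
  simp only [_root_.push]
  rw [sum_comm]
  simp [← mul_sum, (hc _).2, hω.2]

theorem push_ne_zero_iff (hω : ∀ x, 0 ≤ ω x) (hc : ∀ x y, 0 ≤ c x y) {y : Y} :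
    push c ω y ≠ 0 ↔ ∃ x, ω x ≠ 0 ∧ c x y ≠ 0 := by
  rw [push, Ne, sum_eq_zero_iff_of_nonneg fun x _ => mul_nonneg (hω x) (hc x y)]
  simp

end Channel

section Multinomial

variable {X : Type*} [DecidableEq X] {K : ℕ}

theorem flrn_nonneg (φ : Sym X K) (x : X) : 0 ≤ flrn K φ x := by
  unfold flrn
  positivity

theorem flrn_ne_zero_iff {φ : Sym X K} {x : X} : flrn K φ x ≠ 0 ↔ x ∈ (φ : Multiset X) := by
  have hcard : (φ : Multiset X).count x ≤ K := (Multiset.count_le_card x φ).trans_eq φ.2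
  simp only [flrn, ne_eq, div_eq_zero_iff, Nat.cast_eq_zero, not_or, ← Multiset.count_ne_zero]
  omega

theorem mul_flrn (φ : Sym X K) (x : X) : (K : ℝ) * flrn K φ x = (φ : Multiset X).count x := by
  rcases Nat.eq_zero_or_pos K with rfl | hK
  · simp [flrn, Sym.eq_nil_of_card_zero φ]
  · simp [flrn, mul_div_cancel₀, hK.ne']

variable [Fintype X]

theorem sum_count_sym (φ : Sym X K) : ∑ x, ((φ : Multiset X).count x : ℝ) = K := by
  exact_mod_cast (Multiset.sum_count_eq_card fun x _ => mem_univ x).trans φ.2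

theorem isChannel_flrn (hK : 1 ≤ K) : IsChannel (flrn (X := X) K) := by
  refine fun φ => ⟨flrn_nonneg φ, ?_⟩
  have hK : (K : ℝ) ≠ 0 := by positivity
  simp only [flrn, ← sum_div, sum_count_sym, div_self hK]

theorem coefm_pos (φ : Sym X K) : 0 < coefm K φ := by
  unfold coefm
  positivity

theorem multinom_ne_zero_iff {p : X → ℝ} {φ : Sym X K} :
    multinom K p φ ≠ 0 ↔ ∀ x ∈ (φ : Multiset X), p x ≠ 0 := by
  simp only [multinom, ne_eq, mul_eq_zero, (coefm_pos φ).ne', false_or, prod_eq_zero_iff,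
    mem_univ, true_and, pow_eq_zero_iff', not_exists, not_and, ← Multiset.count_ne_zero]
  exact forall_congr' fun x => by tauto

theorem log_multinom {p : X → ℝ} {φ : Sym X K} (h : multinom K p φ ≠ 0) :
    Real.log (multinom K p φ)
      = Real.log (coefm K φ) + ∑ x, ((φ : Multiset X).count x : ℝ) * Real.log (p x) := by
  have hprod := right_ne_zero_of_mul h
  rw [multinom, Real.log_mul (coefm_pos φ).ne' hprod,
    Real.log_prod fun x _ => prod_ne_zero_iff.mp hprod x (mem_univ x)]
  simp [Real.log_pow]

theorem sum_mul_log_multinom (σ : Sym X K → ℝ) {p : X → ℝ}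
    (h : ∀ φ, σ φ ≠ 0 → multinom K p φ ≠ 0) :
    ∑ φ, σ φ * Real.log (multinom K p φ)
      = ∑ φ, σ φ * Real.log (coefm K φ) + K * ∑ x, push (flrn K) σ x * Real.log (p x) := by
  have hterm : ∀ φ, σ φ * Real.log (multinom K p φ)
      = σ φ * Real.log (coefm K φ) + ∑ x, σ φ * (K * flrn K φ x) * Real.log (p x) := by
    intro φ
    rcases eq_or_ne (σ φ) 0 with h0 | h0
    · simp [h0]
    · simp only [log_multinom (h φ h0), mul_add, mul_sum, mul_flrn, mul_assoc]
  rw [sum_congr rfl fun φ _ => hterm φ, sum_add_distrib, sum_comm, mul_sum]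
  simp only [push, sum_mul, mul_sum]
  congr 1
  refine sum_congr rfl fun x _ => sum_congr rfl fun φ _ => ?_
  ring

theorem push_flrn_ne_zero_iff {σ : Sym X K → ℝ} (hσ : ∀ φ, 0 ≤ σ φ) {x : X} :
    push (flrn K) σ x ≠ 0 ↔ ∃ φ, σ φ ≠ 0 ∧ x ∈ (φ : Multiset X) := by
  simp only [push_ne_zero_iff hσ flrn_nonneg, flrn_ne_zero_iff]

theorem multinom_push_flrn_ne_zero {σ : Sym X K → ℝ} (hσ : ∀ φ, 0 ≤ σ φ) {φ : Sym X K}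
    (hφ : σ φ ≠ 0) : multinom K (push (flrn K) σ) φ ≠ 0 :=
  multinom_ne_zero_iff.mpr fun _ hx => (push_flrn_ne_zero_iff hσ).mpr ⟨φ, hφ, hx⟩

end Multinomial

theorem stmt19 {X : Type*} [Fintype X] [DecidableEq X] (K : ℕ) (hK : 1 ≤ K)
    (σ : Sym X K → ℝ) (hσ : IsDist σ) :
    ∀ ω : X → ℝ, IsDist ω →
      klE σ (multinom K (fun x => (1 / (K : ℝ)) * ∑ φ : Sym X K, σ φ * ((φ : Multiset X).count x : ℝ)))
        ≤ klE σ (multinom K ω) := by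
  intro ω hω
  have hflrn : (fun x => (1 / (K : ℝ)) * ∑ φ : Sym X K, σ φ * ((φ : Multiset X).count x : ℝ))
      = push (flrn K) σ := by
    ext x
    simp only [push, flrn, mul_sum]
    exact sum_congr rfl fun φ _ => by ring
  rw [hflrn]
  by_cases hsupp : ∀ φ, σ φ ≠ 0 → multinom K ω φ ≠ 0
  swap
  · rw [show klE σ (multinom K ω) = ⊤ from if_neg hsupp]
    exact le_top
  have hρsupp : ∀ φ, σ φ ≠ 0 → multinom K (push (flrn K) σ) φ ≠ 0 :=
    fun φ => multinom_push_flrn_ne_zero hσ.1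
  have hρdist := hσ.push (isChannel_flrn hK)
  have hgibbs := sum_mul_log_le_sum_mul_log hρdist.1 hω.1 (by rw [hω.2, hρdist.2]) fun x hx => by
    obtain ⟨φ, hφ, hxφ⟩ := (push_flrn_ne_zero_iff hσ.1).mp hx
    exact multinom_ne_zero_iff.mp (hsupp φ hφ) x hxφ
  rw [klE_eq_sub hρsupp, klE_eq_sub hsupp, EReal.coe_le_coe_iff,
    sum_mul_log_multinom σ hρsupp, sum_mul_log_multinom σ hsupp]
  gcongr
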